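/- One has the identity (θ, 0, 0, 0, 0) = 2ξ₆ − ξ₂ + ξ₃ − ξ₄ + ξ₅ in ℝ⁵, and the ℤ-submodule of ℝ⁵ generated by the two vectors (1,0,0,0,0) and (θ,0,0,0,0) is a free ℤ-module of rank 2 which is a direct summand of the ℤ-submodule generated by {ξ₁, ξ₂, ξ₃, ξ₄, ξ₅, ξ₆}. -/

import Mathlib

/-- The basis vectors `ξ₁, …, ξ₆` of the range of the Chern–Connes character `𝐓₂`,
in the case `0 < θ < 1/2` (so `c = -1`). -/
noncomputable def ξ (θ : ℝ) : Fin 6 → Fin 5 → ℝ :=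
  ![![1, 0, 0, 0, 0],
    ![1/2, 2, 0, 0, 0],
    ![1/2, 0, 2, 0, 0],
    ![1/2, 0, 0, 2, 0],
    ![1/2, 0, 0, 0, 2],
    ![θ/2, 1, -1, 1, -1]]

/-!
Since `θ` is irrational, `(1,0,0,0,0)` and `(θ,0,0,0,0)` are independent over `ℤ`, which gives
freeness and rank 2. A complement is `P = span ℤ {ξ₃, ξ₄, ξ₅, ξ₆}`: the identity for
`(θ,0,0,0,0)` expresses `ξ₂` through `P` and the pair, so the two spans together give all of
`span ℤ {ξ₁, …, ξ₆}`; and they meet only in `0`, because the pair lies on the first coordinate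
axis while the last four coordinates of `ξ₃, …, ξ₆` are independent over `ℤ`.
-/

open Submodule

theorem linearIndependent_int_pair_irrational_smul {V : Type*} [AddCommGroup V] [Module ℝ V]
    {v : V} (hv : v ≠ 0) {θ : ℝ} (hθ : Irrational θ) : LinearIndependent ℤ ![v, θ • v] := by
  rw [LinearIndependent.pair_iff]
  intro s t hst
  have hcoeff : (s : ℝ) + t * θ = 0 := by
    rw [← Int.cast_smul_eq_zsmul ℝ, ← Int.cast_smul_eq_zsmul ℝ, smul_smul, ← add_smul] at hst
    exact (smul_eq_zero.1 hst).resolve_right hv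
  obtain rfl : t = 0 := by
    by_contra ht
    exact (hθ.intCast_mul ht).ne_int (-s) (by push_cast; linarith)
  exact ⟨by exact_mod_cast (by simpa using hcoeff : (s : ℝ) = 0), rfl⟩

theorem disjoint_span_range_ker_of_linearIndependent_comp {ι R M M' : Type*} [Semiring R]
    [AddCommMonoid M] [Module R M] [AddCommMonoid M'] [Module R M'] {v : ι → M}
    (f : M →ₗ[R] M') (hfv : LinearIndependent R (f ∘ v)) :
    Disjoint (span R (Set.range v)) (LinearMap.ker f) := by
  rw [LinearMap.disjoint_ker, ← Finsupp.range_linearCombination]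
  rintro _ ⟨l, rfl⟩ hl
  obtain rfl : l = 0 := hfv <| by
    rwa [map_zero, ← Finsupp.apply_linearCombination]
  exact map_zero _

theorem theta_vec_eq_xi_combination (θ : ℝ) :
    (![θ, 0, 0, 0, 0] : Fin 5 → ℝ) = (2 : ℤ) • ξ θ 5 - ξ θ 1 + ξ θ 2 - ξ θ 3 + ξ θ 4 := by
  ext i
  fin_cases i <;> simp [ξ]; ring

noncomputable def thetaComplement (θ : ℝ) : Submodule ℤ (Fin 5 → ℝ) :=
  span ℤ (Set.range ![ξ θ 2, ξ θ 3, ξ θ 4, ξ θ 5])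

theorem span_theta_pair_le_span_xi (θ : ℝ) :
    span ℤ ({![1, 0, 0, 0, 0], ![θ, 0, 0, 0, 0]} : Set (Fin 5 → ℝ)) ≤ span ℤ (Set.range (ξ θ)) := by
  have mem (i : Fin 6) : ξ θ i ∈ span ℤ (Set.range (ξ θ)) := subset_span ⟨i, rfl⟩
  rw [span_le, Set.insert_subset_iff, Set.singleton_subset_iff, theta_vec_eq_xi_combination θ]
  exact ⟨mem 0, add_mem (sub_mem (add_mem (sub_mem (smul_mem _ _ (mem 5)) (mem 1)) (mem 2))
    (mem 3)) (mem 4)⟩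

theorem thetaComplement_le_span_xi (θ : ℝ) : thetaComplement θ ≤ span ℤ (Set.range (ξ θ)) := by
  have mem (i : Fin 6) : ξ θ i ∈ span ℤ (Set.range (ξ θ)) := subset_span ⟨i, rfl⟩
  rw [thetaComplement, span_le, Set.range_subset_iff]
  intro i
  fin_cases i
  exacts [mem 2, mem 3, mem 4, mem 5]

theorem linearIndependent_tail_thetaComplement (θ : ℝ) :
    LinearIndependent ℤ (LinearMap.funLeft ℤ ℝ Fin.succ ∘ ![ξ θ 2, ξ θ 3, ξ θ 4, ξ θ 5]) := by
  rw [Fintype.linearIndependent_iff]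
  intro g hg
  have hg0 : g 0 = 0 ∧ g 1 = 0 ∧ g 2 = 0 ∧ g 3 = 0 := by
    have h := fun j => congrFun hg j
    simp [Fin.sum_univ_four, ξ, LinearMap.funLeft, Fin.forall_fin_succ] at h
    norm_cast at h
    omega
  intro i
  fin_cases i
  exacts [hg0.1, hg0.2.1, hg0.2.2.1, hg0.2.2.2]

theorem span_theta_pair_inf_thetaComplement (θ : ℝ) :
    span ℤ ({![1, 0, 0, 0, 0], ![θ, 0, 0, 0, 0]} : Set (Fin 5 → ℝ)) ⊓ thetaComplement θ = ⊥ := by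
  have hker : span ℤ ({![1, 0, 0, 0, 0], ![θ, 0, 0, 0, 0]} : Set (Fin 5 → ℝ))
      ≤ LinearMap.ker (LinearMap.funLeft ℤ ℝ Fin.succ) := by
    rw [span_le, Set.insert_subset_iff, Set.singleton_subset_iff]
    constructor <;> ext j <;> fin_cases j <;> rfl
  rw [← disjoint_iff]
  exact ((disjoint_span_range_ker_of_linearIndependent_comp _
    (linearIndependent_tail_thetaComplement θ)).mono_right hker).symm

theorem span_theta_pair_sup_thetaComplement (θ : ℝ) :
    span ℤ ({![1, 0, 0, 0, 0], ![θ, 0, 0, 0, 0]} : Set (Fin 5 → ℝ)) ⊔ thetaComplement θ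
      = span ℤ (Set.range (ξ θ)) := by
  set N := span ℤ ({![1, 0, 0, 0, 0], ![θ, 0, 0, 0, 0]} : Set (Fin 5 → ℝ))
  refine le_antisymm (sup_le (span_theta_pair_le_span_xi θ) (thetaComplement_le_span_xi θ)) ?_
  have memN : ![θ, 0, 0, 0, 0] ∈ N ⊔ thetaComplement θ :=
    mem_sup_left (subset_span (Set.mem_insert_of_mem _ rfl))
  have memP (i : Fin 4) : ![ξ θ 2, ξ θ 3, ξ θ 4, ξ θ 5] i ∈ N ⊔ thetaComplement θ :=
    mem_sup_right (subset_span ⟨i, rfl⟩)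
  have hξ1 : ξ θ 1 = (2 : ℤ) • ξ θ 5 + ξ θ 2 - ξ θ 3 + ξ θ 4 - ![θ, 0, 0, 0, 0] := by
    rw [theta_vec_eq_xi_combination θ]; abel
  rw [span_le, Set.range_subset_iff]
  intro i
  fin_cases i
  · exact mem_sup_left (subset_span (Set.mem_insert _ _))
  · exact hξ1 ▸ sub_mem (add_mem (sub_mem (add_mem (smul_mem _ _ (memP 3)) (memP 0)) (memP 1))
      (memP 2)) memN
  exacts [memP 0, memP 1, memP 2, memP 3]

theorem theta_vector_flip_case_general (θ : ℝ) (hθ : Irrational θ) :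
    (![θ, 0, 0, 0, 0] : Fin 5 → ℝ)
      = (2 : ℤ) • ξ θ 5 - ξ θ 1 + ξ θ 2 - ξ θ 3 + ξ θ 4 ∧
    Module.Free ℤ
      (Submodule.span ℤ ({![1, 0, 0, 0, 0], ![θ, 0, 0, 0, 0]} : Set (Fin 5 → ℝ))) ∧
    Module.finrank ℤ
      (Submodule.span ℤ ({![1, 0, 0, 0, 0], ![θ, 0, 0, 0, 0]} : Set (Fin 5 → ℝ))) = 2 ∧
    Submodule.span ℤ ({![1, 0, 0, 0, 0], ![θ, 0, 0, 0, 0]} : Set (Fin 5 → ℝ))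
      ≤ Submodule.span ℤ (Set.range (ξ θ)) ∧
    ∃ P : Submodule ℤ (Fin 5 → ℝ),
      P ≤ Submodule.span ℤ (Set.range (ξ θ)) ∧
      Submodule.span ℤ ({![1, 0, 0, 0, 0], ![θ, 0, 0, 0, 0]} : Set (Fin 5 → ℝ)) ⊓ P = ⊥ ∧
      Submodule.span ℤ ({![1, 0, 0, 0, 0], ![θ, 0, 0, 0, 0]} : Set (Fin 5 → ℝ)) ⊔ P
        = Submodule.span ℤ (Set.range (ξ θ)) := by
  have hli : LinearIndependent ℤ ![(![1, 0, 0, 0, 0] : Fin 5 → ℝ), ![θ, 0, 0, 0, 0]] := by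
    have hθe : θ • (![1, 0, 0, 0, 0] : Fin 5 → ℝ) = ![θ, 0, 0, 0, 0] := by simp
    exact hθe ▸ linearIndependent_int_pair_irrational_smul (by simp) hθ
  have hrange := Matrix.range_cons_cons_empty (![1, 0, 0, 0, 0] : Fin 5 → ℝ) ![θ, 0, 0, 0, 0] ![]
  refine ⟨theta_vec_eq_xi_combination θ, hrange ▸ .of_basis (.span hli),
    by rw [← hrange, finrank_span_eq_card hli, Fintype.card_fin], span_theta_pair_le_span_xi θ,
    thetaComplement θ, thetaComplement_le_span_xi θ, span_theta_pair_inf_thetaComplement θ,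
    span_theta_pair_sup_thetaComplement θ⟩

/-- `(θ,0,0,0,0) = 2ξ₆ - ξ₂ + ξ₃ - ξ₄ + ξ₅` in ℝ⁵, and the ℤ-submodule
generated by `(1,0,0,0,0)` and `(θ,0,0,0,0)` is free of rank 2 and a direct summand of
the ℤ-submodule generated by `{ξ₁, …, ξ₆}`. -/
theorem theta_vector_flip_case (θ : ℝ) (hθ : Irrational θ)
    (h0 : 0 < θ) (h12 : θ < 1/2) :
    (![θ, 0, 0, 0, 0] : Fin 5 → ℝ)
      = (2 : ℤ) • ξ θ 5 - ξ θ 1 + ξ θ 2 - ξ θ 3 + ξ θ 4 ∧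
    Module.Free ℤ
      (Submodule.span ℤ ({![1, 0, 0, 0, 0], ![θ, 0, 0, 0, 0]} : Set (Fin 5 → ℝ))) ∧
    Module.finrank ℤ
      (Submodule.span ℤ ({![1, 0, 0, 0, 0], ![θ, 0, 0, 0, 0]} : Set (Fin 5 → ℝ))) = 2 ∧
    Submodule.span ℤ ({![1, 0, 0, 0, 0], ![θ, 0, 0, 0, 0]} : Set (Fin 5 → ℝ))
      ≤ Submodule.span ℤ (Set.range (ξ θ)) ∧
    ∃ P : Submodule ℤ (Fin 5 → ℝ),
      P ≤ Submodule.span ℤ (Set.range (ξ θ)) ∧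
      Submodule.span ℤ ({![1, 0, 0, 0, 0], ![θ, 0, 0, 0, 0]} : Set (Fin 5 → ℝ)) ⊓ P = ⊥ ∧
      Submodule.span ℤ ({![1, 0, 0, 0, 0], ![θ, 0, 0, 0, 0]} : Set (Fin 5 → ℝ)) ⊔ P
        = Submodule.span ℤ (Set.range (ξ θ)) :=
  theta_vector_flip_case_general θ hθ
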